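/- arXiv:2602.10565 — 3 statements merged into one kernel-verified Lean document; each statement's English description precedes it below -/
import Mathlib

section
/- Let A and B be symmetric positive definite matrices with A - B positive semidefinite. Then trace(A⁻¹(A - B)) ≤ ln(det A / det B). -/
open Matrix

/-!
Factor `A⁻¹ = Xᴴ X`. Then `M = X B Xᴴ` is positive definite with `tr M = tr (A⁻¹ B)` and
`det M = det B / det A`, and the claim becomes `log det M ≤ tr M - d`, which is the sum over the
eigenvalues `λ` of `M` of `log λ ≤ λ - 1`.
-/

namespace Matrix.PosDef

variable {n : Type*} [Fintype n] [DecidableEq n]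

theorem log_det_le_trace_sub_card {M : Matrix n n ℝ} (hM : M.PosDef) :
    Real.log M.det ≤ M.trace - Fintype.card n := by
  have hpos := hM.eigenvalues_pos
  rw [hM.isHermitian.det_eq_prod_eigenvalues, hM.isHermitian.trace_eq_sum_eigenvalues]
  simp only [RCLike.ofReal_real_eq_id, id_eq]
  rw [Real.log_prod fun i _ => (hpos i).ne', ← Finset.card_univ, Finset.cast_card,
    ← Finset.sum_sub_distrib]
  exact Finset.sum_le_sum fun i _ => Real.log_le_sub_one_of_pos (hpos i)

open scoped MatrixOrder in
theorem log_det_div_le_trace_inv_mul_sub_card {A B : Matrix n n ℝ} (hA : A.PosDef)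
    (hB : B.PosDef) : Real.log (B.det / A.det) ≤ (A⁻¹ * B).trace - Fintype.card n := by
  obtain ⟨X, hX⟩ := CStarAlgebra.nonneg_iff_eq_star_mul_self.mp hA.inv.posSemidef.nonneg
  have hX_unit : IsUnit X := isUnit_of_mul_isUnit_right (hX ▸ hA.inv.isUnit)
  have hM : (X * B * star X).PosDef := (IsUnit.posDef_star_right_conjugate_iff hX_unit).mpr hB
  have htrace : (X * B * star X).trace = (A⁻¹ * B).trace := by
    rw [trace_mul_cycle, hX]
  have hdet : (X * B * star X).det = B.det / A.det := by
    rw [det_mul, det_mul, mul_right_comm, ← det_mul, det_mul_comm, ← hX, det_nonsing_inv,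
      Ring.inverse_eq_inv, div_eq_mul_inv, mul_comm]
  simpa only [htrace, hdet] using hM.log_det_le_trace_sub_card

end Matrix.PosDef

theorem trace_inv_mul_sub_le_log_det_div_general {d : ℕ}
    (A B : Matrix (Fin d) (Fin d) ℝ)
    (hA : A.PosDef) (hB : B.PosDef) :
    (A⁻¹ * (A - B)).trace ≤ Real.log (A.det / B.det) := by
  have htrace : (A⁻¹ * (A - B)).trace = d - (A⁻¹ * B).trace := by
    rw [Matrix.mul_sub, nonsing_inv_mul A hA.det_pos.ne'.isUnit, trace_sub, trace_one,
      Fintype.card_fin]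
  have key := hA.log_det_div_le_trace_inv_mul_sub_card hB
  rw [Fintype.card_fin] at key
  rw [htrace, ← inv_div, Real.log_inv]
  linarith

/-- for positive definite `A ⪰ B`, `trace(A⁻¹(A-B)) ≤ ln(det A / det B)`. -/
theorem trace_inv_mul_sub_le_log_det_div {d : ℕ}
    (A B : Matrix (Fin d) (Fin d) ℝ)
    (hA : A.PosDef) (hB : B.PosDef) (hAB : (A - B).PosSemidef) :
    (A⁻¹ * (A - B)).trace ≤ Real.log (A.det / B.det) :=
  trace_inv_mul_sub_le_log_det_div_general A B hA hB
end

section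
/- Let F₁, …, F_T ∈ ℝ^d with ‖F_t‖ ≤ L₀, ε > 0, and define A_t = ε I_d + Σ_{s=1}^t F_s F_sᵀ. Then Σ_{t=1}^T F_tᵀ A_t⁻¹ F_t ≤ d ln(1 + T L₀²/ε). -/
/-!
By the matrix determinant lemma, `det A_{t-1} / det A_t = 1 - F_tᵀ A_t⁻¹ F_t`, so `log r ≤ r - 1`
gives `F_tᵀ A_t⁻¹ F_t ≤ log det A_t - log det A_{t-1}`. The sum therefore telescopes to
`log det A_T - d log ε`. The quadratic form of `A_T` is `ε |x|² + ∑ (F_s ⬝ x)²`, which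
Cauchy–Schwarz bounds by `(ε + T L₀²) |x|²`; hence every eigenvalue of `A_T` is at most
`ε + T L₀²` and `det A_T ≤ (ε + T L₀²)^d`.
-/

open Matrix Finset

namespace Matrix

variable {n : Type*} [Fintype n]

theorem det_sub_vecMulVec [DecidableEq n] {α : Type*} [CommRing α] {A : Matrix n n α}
    (hA : IsUnit A.det) (u v : n → α) :
    (A - vecMulVec u v).det = A.det * (1 - v ⬝ᵥ (A⁻¹ *ᵥ u)) := by
  rw [sub_eq_add_neg, ← neg_vecMulVec, vecMulVec_eq Unit,
    det_add_replicateCol_mul_replicateRow hA, Matrix.mul_assoc, ← replicateCol_mulVec,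
    det_unique (1 + _), Matrix.add_apply, one_apply_eq, replicateRow_mul_replicateCol_apply,
    mulVec_neg, dotProduct_neg, sub_eq_add_neg]

theorem dotProduct_inv_mulVec_le_log_det_sub [DecidableEq n] {A : Matrix n n ℝ} {u : n → ℝ}
    (hA : 0 < A.det) (hB : 0 < (A - vecMulVec u u).det) :
    u ⬝ᵥ (A⁻¹ *ᵥ u) ≤ Real.log A.det - Real.log (A - vecMulVec u u).det := by
  have hratio : (A - vecMulVec u u).det / A.det = 1 - u ⬝ᵥ (A⁻¹ *ᵥ u) := by
    rw [det_sub_vecMulVec hA.ne'.isUnit, mul_div_cancel_left₀ _ hA.ne']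
  have hlog := Real.log_le_sub_one_of_pos (div_pos hB hA)
  rw [Real.log_div hB.ne' hA.ne', hratio] at hlog
  linarith

theorem dotProduct_vecMulVec_self_mulVec (u x : n → ℝ) :
    x ⬝ᵥ (vecMulVec u u *ᵥ x) = (u ⬝ᵥ x) ^ 2 := by
  rw [vecMulVec_mulVec]
  simp [sq, dotProduct_comm]

theorem dotProduct_sq_le (u v : n → ℝ) : (u ⬝ᵥ v) ^ 2 ≤ (u ⬝ᵥ u) * (v ⬝ᵥ v) := by
  simpa [dotProduct, sq] using Finset.sum_mul_sq_le_sq_mul_sq Finset.univ u v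

theorem posSemidef_vecMulVec_self (u : n → ℝ) : (vecMulVec u u).PosSemidef := by
  simpa using posSemidef_vecMulVec_self_star u

theorem IsHermitian.eigenvalues_le [DecidableEq n] {M : Matrix n n ℝ} (hM : M.IsHermitian)
    {c : ℝ} (h : ∀ x, x ⬝ᵥ (M *ᵥ x) ≤ c * (x ⬝ᵥ x)) (i : n) : hM.eigenvalues i ≤ c := by
  set v := hM.eigenvectorBasis i
  have hv : ⇑v ⬝ᵥ ⇑v = 1 := by
    have := real_inner_self_eq_norm_sq v
    rwa [EuclideanSpace.inner_eq_star_dotProduct, hM.eigenvectorBasis.orthonormal.1 i, one_pow,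
      star_trivial] at this
  have := h v
  rwa [hM.mulVec_eigenvectorBasis, dotProduct_smul, hv, smul_eq_mul, mul_one, mul_one] at this

theorem PosSemidef.det_le_pow [DecidableEq n] {M : Matrix n n ℝ} (hM : M.PosSemidef) {c : ℝ}
    (h : ∀ x, x ⬝ᵥ (M *ᵥ x) ≤ c * (x ⬝ᵥ x)) : M.det ≤ c ^ Fintype.card n := by
  rw [hM.isHermitian.det_eq_prod_eigenvalues, ← Finset.card_univ, ← prod_const]
  exact prod_le_prod (fun i _ => hM.eigenvalues_nonneg i)
    (fun i _ => hM.isHermitian.eigenvalues_le h i)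

section Regularized

variable [DecidableEq n] {ι : Type*} (s : Finset ι) (ε : ℝ) (F : ι → n → ℝ)

theorem posDef_smul_one_add_sum_vecMulVec (hε : 0 < ε) :
    (ε • (1 : Matrix n n ℝ) + ∑ i ∈ s, vecMulVec (F i) (F i)).PosDef :=
  (PosDef.one.smul hε).add_posSemidef
    (posSemidef_sum s fun i _ => posSemidef_vecMulVec_self (F i))

theorem dotProduct_smul_one_add_sum_vecMulVec_mulVec (x : n → ℝ) :
    x ⬝ᵥ ((ε • (1 : Matrix n n ℝ) + ∑ i ∈ s, vecMulVec (F i) (F i)) *ᵥ x) =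
      ε * (x ⬝ᵥ x) + ∑ i ∈ s, (F i ⬝ᵥ x) ^ 2 := by
  simp only [add_mulVec, smul_mulVec, one_mulVec, sum_mulVec, dotProduct_add, dotProduct_smul,
    dotProduct_sum, dotProduct_vecMulVec_self_mulVec, smul_eq_mul]

theorem det_smul_one_add_sum_vecMulVec_le (hε : 0 < ε) {L : ℝ}
    (hF : ∀ i ∈ s, F i ⬝ᵥ F i ≤ L) :
    (ε • (1 : Matrix n n ℝ) + ∑ i ∈ s, vecMulVec (F i) (F i)).det ≤
      (ε + #s * L) ^ Fintype.card n := by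
  refine (posDef_smul_one_add_sum_vecMulVec s ε F hε).posSemidef.det_le_pow fun x => ?_
  rw [dotProduct_smul_one_add_sum_vecMulVec_mulVec, add_mul, ← nsmul_eq_mul, ← sum_const,
    sum_mul]
  gcongr with i hi
  calc (F i ⬝ᵥ x) ^ 2 ≤ (F i ⬝ᵥ F i) * (x ⬝ᵥ x) := dotProduct_sq_le _ _
    _ ≤ L * (x ⬝ᵥ x) := by gcongr; exacts [dotProduct_self_star_nonneg x, hF i hi]

end Regularized

end Matrix

theorem Finset.sum_Icc_le_sub_of_le_sub {f g : ℕ → ℝ} (h : ∀ t, f (t + 1) ≤ g (t + 1) - g t)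
    (T : ℕ) : ∑ t ∈ Icc 1 T, f t ≤ g T - g 0 := by
  induction T with
  | zero => simp
  | succ T ih => rw [sum_Icc_succ_top (by omega)]; linarith [h T]

theorem log_det_potential_bound_general {d : ℕ} (T : ℕ)
    (F : ℕ → Fin d → ℝ) (L₀ ε : ℝ) (hε : 0 < ε)
    (hF : ∀ t, F t ⬝ᵥ F t ≤ L₀ ^ 2)
    (A : ℕ → Matrix (Fin d) (Fin d) ℝ)
    (hA : ∀ t, A t = ε • (1 : Matrix (Fin d) (Fin d) ℝ) +
      ∑ s ∈ Finset.Icc 1 t, vecMulVec (F s) (F s)) :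
    ∑ t ∈ Finset.Icc 1 T, F t ⬝ᵥ ((A t)⁻¹ *ᵥ F t) ≤
      d * Real.log (1 + T * L₀ ^ 2 / ε) := by
  have hdet_pos (t : ℕ) : 0 < (A t).det :=
    hA t ▸ (posDef_smul_one_add_sum_vecMulVec _ ε F hε).det_pos
  have hA_succ (t : ℕ) : A t = A (t + 1) - vecMulVec (F (t + 1)) (F (t + 1)) := by
    rw [hA, hA, sum_Icc_succ_top (by omega)]
    abel
  have hstep (t : ℕ) : F (t + 1) ⬝ᵥ ((A (t + 1))⁻¹ *ᵥ F (t + 1)) ≤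
      Real.log (A (t + 1)).det - Real.log (A t).det := by
    rw [hA_succ t]
    exact dotProduct_inv_mulVec_le_log_det_sub (hdet_pos _) (hA_succ t ▸ hdet_pos t)
  have hA_zero : (A 0).det = ε ^ d := by simp [hA]
  have hA_le : (A T).det ≤ (ε + T * L₀ ^ 2) ^ d := by
    simpa [hA] using det_smul_one_add_sum_vecMulVec_le (Icc 1 T) ε F hε fun s _ => hF s
  calc ∑ t ∈ Icc 1 T, F t ⬝ᵥ ((A t)⁻¹ *ᵥ F t)
      ≤ Real.log (A T).det - Real.log (A 0).det :=
        sum_Icc_le_sub_of_le_sub (g := fun t => Real.log (A t).det) hstep T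
    _ ≤ Real.log ((ε + T * L₀ ^ 2) ^ d) - Real.log (ε ^ d) := by
        rw [hA_zero]; gcongr; exact hdet_pos T
    _ = d * Real.log (1 + T * L₀ ^ 2 / ε) := by
        rw [Real.log_pow, Real.log_pow, ← mul_sub, ← Real.log_div (by positivity) hε.ne']
        congr 2
        field_simp

/-- the log-determinant potential bound
`∑_{t=1}^T Fₜᵀ Aₜ⁻¹ Fₜ ≤ d ln(1 + T L₀²/ε)` for `Aₜ = ε I + ∑_{s=1}^t Fₛ Fₛᵀ`. -/
theorem log_det_potential_bound {d : ℕ} (T : ℕ)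
    (F : ℕ → Fin d → ℝ) (L₀ ε : ℝ) (hL₀ : 0 ≤ L₀) (hε : 0 < ε)
    (hF : ∀ t, F t ⬝ᵥ F t ≤ L₀ ^ 2)
    (A : ℕ → Matrix (Fin d) (Fin d) ℝ)
    (hA : ∀ t, A t = ε • (1 : Matrix (Fin d) (Fin d) ℝ) +
      ∑ s ∈ Finset.Icc 1 t, vecMulVec (F s) (F s)) :
    ∑ t ∈ Finset.Icc 1 T, F t ⬝ᵥ ((A t)⁻¹ *ᵥ F t) ≤
      d * Real.log (1 + T * L₀ ^ 2 / ε) :=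
  log_det_potential_bound_general T F L₀ ε hε hF A hA
end

section
/- Let (g_t)_{t=1}^T be nonnegative real-valued functions on a set Z and (z_t)_{t=1}^{T+1} points in Z such that g_t(z_{t+1}) ≤ (1/4) g_t(z_t) for all t. Then Σ_{t=1}^T g_t(z_t) ≤ 2 U_T + 2(g_1(z_1) - g_T(z_{T+1})), where U_T = Σ_{t=2}^T sup_{z∈Z} (g_t(z) - g_{t-1}(z)). -/
open Finset

private lemma key_contraction_bound {Z : Type*} [Nonempty Z]
    (g : ℕ → Z → ℝ) (z : ℕ → Z)
    (hbdd : ∀ t, BddAbove (Set.range fun zz => g t zz - g (t - 1) zz))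
    (n : ℕ) (hcontract : ∀ t, 1 ≤ t → t ≤ n + 1 → g t (z (t + 1)) ≤ 1 / 4 * g t (z t)) :
    ∑ t ∈ Finset.Icc 1 (n + 1), g t (z t) ≤
      g 1 (z 1) + (∑ t ∈ Finset.Icc 2 (n + 1), ⨆ zz, (g t zz - g (t - 1) zz)) +
        1 / 4 * ∑ t ∈ Finset.Icc 1 n, g t (z t) := by
  induction n with
  | zero => simp
  | succ m ih =>
    have ih' := ih (fun t h1 h2 => hcontract t h1 (by omega))
    rw [Finset.sum_Icc_succ_top (by omega : 1 ≤ m + 1 + 1),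
        Finset.sum_Icc_succ_top (by omega : 2 ≤ m + 1 + 1),
        Finset.sum_Icc_succ_top (by omega : 1 ≤ m + 1)]
    rw [Finset.sum_Icc_succ_top (by omega : 1 ≤ m + 1)] at ih'
    have hsup : g (m + 2) (z (m + 2)) - g (m + 1) (z (m + 2)) ≤
        ⨆ zz, (g (m + 2) zz - g (m + 2 - 1) zz) := by
      have := le_ciSup (hbdd (m + 2)) (z (m + 2))
      simpa using this
    have hc : g (m + 1) (z (m + 2)) ≤ 1 / 4 * g (m + 1) (z (m + 1)) :=
      hcontract (m + 1) (by omega) (by omega)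
    have : (m + 1 + 1 : ℕ) - 1 = m + 1 := by omega
    rw [show (m + 1 + 1 : ℕ) = m + 2 from rfl] at *
    linarith

/-- if each round the gap function is contracted by a factor `1/4`,
the cumulative gap is bounded by twice the variation plus boundary terms. -/
theorem contraction_cumulative_bound {Z : Type*} [Nonempty Z] (T : ℕ) (hT : 1 ≤ T)
    (g : ℕ → Z → ℝ) (z : ℕ → Z)
    (hnonneg : ∀ t zz, 0 ≤ g t zz)
    (hbdd : ∀ t, BddAbove (Set.range fun zz => g t zz - g (t - 1) zz))
    (hcontract : ∀ t ∈ Finset.Icc 1 T, g t (z (t + 1)) ≤ 1 / 4 * g t (z t)) :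
    ∑ t ∈ Finset.Icc 1 T, g t (z t) ≤
      2 * (∑ t ∈ Finset.Icc 2 T, ⨆ zz, (g t zz - g (t - 1) zz)) +
        2 * (g 1 (z 1) - g T (z (T + 1))) := by
  obtain ⟨n, rfl⟩ : ∃ n, T = n + 1 := ⟨T - 1, by omega⟩
  have key := key_contraction_bound g z hbdd n
    (fun t h1 h2 => hcontract t (Finset.mem_Icc.2 ⟨h1, h2⟩))
  have hsplit : ∑ t ∈ Finset.Icc 1 (n + 1), g t (z t) =
      (∑ t ∈ Finset.Icc 1 n, g t (z t)) + g (n + 1) (z (n + 1)) :=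
    Finset.sum_Icc_succ_top (by omega) _
  have hA : 0 ≤ ∑ t ∈ Finset.Icc 1 (n + 1), g t (z t) :=
    Finset.sum_nonneg fun t _ => hnonneg t (z t)
  have hc : g (n + 1) (z (n + 2)) ≤ 1 / 4 * g (n + 1) (z (n + 1)) := by
    have := hcontract (n + 1) (Finset.mem_Icc.2 ⟨by omega, le_refl _⟩)
    simpa using this
  have h0 : 0 ≤ g (n + 1) (z (n + 1)) := hnonneg _ _
  rw [show (n + 1 + 1 : ℕ) = n + 2 from rfl]
  linarith
end
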